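/- arXiv:2604.15477 — 3 statements merged into one kernel-verified Lean document; each statement's English description precedes it below -/
import Mathlib

section
/- Let T ⊂ ℝ^p be compact, h : T × ℝ^n → ℝ continuous in τ and continuously differentiable in x, F : ℝ^n → ℝ^n continuous, and S = {x : h(τ,x) ≥ 0 ∀τ ∈ T}. Define H(x) = min_{τ∈T} h(τ,x) and M(x) = argmin_{τ∈T} h(τ,x). Suppose there is an open neighborhood N of ∂S such that for every x ∈ N \ S and every τ ∈ M(x), (∂h/∂x)(τ,x)·F(x) ≥ 0. Then every solution of x' = F(x) starting in S remains in S (S is forward invariant). -/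
open Set Filter Topology

/-- Theorem 3, safety under weaker conditions: if the Lie-derivative
condition holds at minimizing parameters on a neighborhood of `∂S` outside `S`,
then `S` is forward invariant for continuous `F`. -/
theorem stmt8 {p n : ℕ} (T : Set (Fin p → ℝ)) (hT : IsCompact T) (hTne : T.Nonempty)
    (h : (Fin p → ℝ) → (Fin n → ℝ) → ℝ)
    (hc : Continuous fun q : (Fin p → ℝ) × (Fin n → ℝ) => h q.1 q.2)
    (Dh : (Fin p → ℝ) → (Fin n → ℝ) → ((Fin n → ℝ) →L[ℝ] ℝ))
    (hD : ∀ τ ∈ T, ∀ x : Fin n → ℝ, HasFDerivAt (h τ) (Dh τ x) x)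
    (hDc : Continuous fun q : (Fin p → ℝ) × (Fin n → ℝ) => Dh q.1 q.2)
    (F : (Fin n → ℝ) → (Fin n → ℝ)) (hF : Continuous F)
    (S : Set (Fin n → ℝ)) (hS : S = {x | ∀ τ ∈ T, 0 ≤ h τ x})
    (N : Set (Fin n → ℝ)) (hN : IsOpen N) (hfr : frontier S ⊆ N)
    -- barrier condition at minimizing parameters, on `N \ S`
    (hcond : ∀ x ∈ N \ S, ∀ τ ∈ T, (∀ σ ∈ T, h τ x ≤ h σ x) → 0 ≤ Dh τ x (F x)) :
    ∀ δ : ℝ, 0 < δ → ∀ γ : ℝ → (Fin n → ℝ), γ 0 ∈ S →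
      (∀ t ∈ Set.Ico (0 : ℝ) δ, HasDerivAt γ (F (γ t)) t) →
      ∀ t ∈ Set.Ico (0 : ℝ) δ, γ t ∈ S := by
  intro δ hδ γ hγ0 hγ' t ht
  by_contra hmem
  -- the min function `Hf`
  set Hf : (Fin n → ℝ) → ℝ := fun y => sInf ((fun σ => h σ y) '' T) with hHfdef
  have hcy : ∀ y : Fin n → ℝ, Continuous fun σ => h σ y := fun y =>
    hc.comp (continuous_id.prodMk continuous_const)
  have hHc : Continuous Hf := by
    refine hT.continuous_sInf (f := fun y σ => h σ y) ?_
    exact hc.comp continuous_swap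
  have hle : ∀ y : Fin n → ℝ, ∀ σ ∈ T, Hf y ≤ h σ y := by
    intro y σ hσ
    exact csInf_le (hT.image_of_continuousOn (hcy y).continuousOn).bddBelow
      (mem_image_of_mem _ hσ)
  have hminex : ∀ y : Fin n → ℝ, ∃ τ, τ ∈ T ∧ (∀ σ ∈ T, h τ y ≤ h σ y) ∧ Hf y = h τ y := by
    intro y
    obtain ⟨τ, hτT, hτmin⟩ := hT.exists_isMinOn hTne (hcy y).continuousOn
    refine ⟨τ, hτT, fun σ hσ => hτmin hσ, le_antisymm (hle y τ hτT) ?_⟩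
    refine le_csInf ((hTne.image _)) ?_
    rintro b ⟨σ, hσ, rfl⟩
    exact hτmin hσ
  choose τfn hτT hτmin hτval using hminex
  have hSH : ∀ y, y ∈ S ↔ 0 ≤ Hf y := by
    intro y
    rw [hS]
    constructor
    · intro hy
      rw [hτval y]
      exact hy (τfn y) (hτT y)
    · intro hy σ hσ
      exact hy.trans (hle y σ hσ)
  have hSclosed : IsClosed S := by
    have : S = Hf ⁻¹' Ici 0 := by ext y; simpa [mem_preimage] using hSH y
    rw [this]; exact isClosed_Ici.preimage hHc
  -- the hitting time
  have hγcont : ∀ s ∈ Icc (0:ℝ) t, ContinuousAt γ s := fun s hs =>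
    (hγ' s ⟨hs.1, lt_of_le_of_lt hs.2 ht.2⟩).continuousAt
  have hγOn0 : ContinuousOn γ (Icc (0:ℝ) t) := fun s hs => (hγcont s hs).continuousWithinAt
  set A := Icc (0:ℝ) t ∩ γ ⁻¹' S with hAdef
  have hAcl : IsClosed A :=
    hγOn0.preimage_isClosed_of_isClosed isClosed_Icc hSclosed
  have hAcp : IsCompact A := isCompact_Icc.of_isClosed_subset hAcl inter_subset_left
  have hAne : A.Nonempty := ⟨0, ⟨le_rfl, ht.1⟩, hγ0⟩
  set t₀ := sSup A with ht₀def
  have ht₀A : t₀ ∈ A := hAcp.sSup_mem hAne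
  have ht₀0 : 0 ≤ t₀ := ht₀A.1.1
  have ht₀t : t₀ ≤ t := ht₀A.1.2
  have ht₀S : γ t₀ ∈ S := ht₀A.2
  have ht₀lt : t₀ < t := lt_of_le_of_ne ht₀t fun he => hmem (he ▸ ht₀S)
  have hnotS : ∀ s, t₀ < s → s ≤ t → γ s ∉ S := by
    intro s hs1 hs2 hsS
    exact absurd (le_csSup hAcp.bddAbove ⟨⟨ht₀0.trans hs1.le, hs2⟩, hsS⟩) (not_le.2 hs1)
  -- γ t₀ is on the frontier, hence in N
  have hfront : γ t₀ ∈ frontier S := by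
    rw [frontier_eq_closure_inter_closure]
    refine ⟨subset_closure ht₀S, ?_⟩
    have htend : Tendsto γ (𝓝[>] t₀) (𝓝 (γ t₀)) :=
      (hγcont t₀ ⟨ht₀0, ht₀t⟩).tendsto.mono_left nhdsWithin_le_nhds
    refine mem_closure_of_tendsto htend ?_
    filter_upwards [Ioc_mem_nhdsGT_of_mem ⟨le_rfl, ht₀lt⟩] with s hs
    exact hnotS s hs.1 hs.2
  obtain ⟨ε', hε', hball⟩ : ∃ ε' > 0, ∀ s : ℝ, dist s t₀ < ε' → γ s ∈ N := by
    have : γ ⁻¹' N ∈ 𝓝 t₀ := (hγcont t₀ ⟨ht₀0, ht₀t⟩) (hN.mem_nhds (hfr hfront))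
    rcases Metric.mem_nhds_iff.1 this with ⟨ε', hε', hsub⟩
    exact ⟨ε', hε', fun s hs => hsub hs⟩
  set ε := min (ε'/2) (t - t₀) with hεdef
  have hε : 0 < ε := lt_min (by linarith) (by linarith)
  set m := t₀ + ε with hmdef
  have ht₀m : t₀ < m := by simp [hmdef]; linarith
  have hmt : m ≤ t := by
    have := min_le_right (ε'/2) (t - t₀)
    simp only [hmdef]; linarith [this]
  have hNmem : ∀ s, t₀ ≤ s → s ≤ m → γ s ∈ N := by
    intro s h1 h2
    apply hball
    rw [Real.dist_eq, abs_of_nonneg (by linarith)]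
    have := min_le_left (ε'/2) (t - t₀)
    have : ε ≤ ε'/2 := this
    linarith
  -- key slope estimate
  have key : ∀ x, t₀ < x → x < m → ∀ r, (0:ℝ) < r →
      ∃ᶠ z in 𝓝[>] x, slope (fun s => -(Hf (γ s))) x z < r := by
    intro x hx1 hx2 r hr
    by_contra hbad
    rw [Filter.not_frequently] at hbad
    have hxt : x < t := lt_of_lt_of_le hx2 hmt
    have hx0 : 0 ≤ x := ht₀0.trans hx1.le
    -- MVT choice
    have hMVT : ∀ z ∈ Ioc x m, ∃ cc ∈ Ioo x z,
        (Dh (τfn (γ z)) (γ cc)) (F (γ cc)) ≤ (Hf (γ z) - Hf (γ x)) / (z - x) := by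
      intro z hz
      have hder : ∀ s ∈ Icc x z, HasDerivAt (fun s => h (τfn (γ z)) (γ s))
          ((Dh (τfn (γ z)) (γ s)) (F (γ s))) s := by
        intro s hs
        have hsI : s ∈ Ico (0:ℝ) δ :=
          ⟨hx0.trans hs.1, lt_of_le_of_lt (hs.2.trans (hz.2.trans hmt)) ht.2⟩
        exact (hD _ (hτT (γ z)) (γ s)).comp_hasDerivAt s (hγ' s hsI)
      obtain ⟨cc, hccm, hcceq⟩ := exists_hasDerivAt_eq_slope
        (fun s => h (τfn (γ z)) (γ s)) (fun s => (Dh (τfn (γ z)) (γ s)) (F (γ s)))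
        hz.1 (fun s hs => (hder s hs).continuousAt.continuousWithinAt)
        (fun s hs => hder s (Ioo_subset_Icc_self hs))
      refine ⟨cc, hccm, ?_⟩
      rw [hcceq]
      have hzx : (0:ℝ) < z - x := by linarith [hz.1]
      have h1 : Hf (γ z) = h (τfn (γ z)) (γ z) := hτval (γ z)
      have h2 : Hf (γ x) ≤ h (τfn (γ z)) (γ x) := hle (γ x) _ (hτT (γ z))
      exact (div_le_div_iff_of_pos_right hzx).2 (by linarith)
    choose! cc hcc1 hcc2 using hMVT
    -- ultrafilter argument
    set u : Ultrafilter ℝ := Ultrafilter.of (𝓝[>] x) with hudef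
    have hu : (u : Filter ℝ) ≤ 𝓝[>] x := Ultrafilter.of_le _
    have hIoc : ∀ᶠ z in (u : Filter ℝ), z ∈ Ioc x m :=
      hu (Ioc_mem_nhdsGT_of_mem ⟨le_rfl, hx2⟩)
    have hid : Tendsto (fun z : ℝ => z) (u : Filter ℝ) (𝓝 x) :=
      tendsto_id.mono_left (hu.trans nhdsWithin_le_nhds)
    have hccx : Tendsto cc (u : Filter ℝ) (𝓝 x) := by
      refine tendsto_of_tendsto_of_tendsto_of_le_of_le' tendsto_const_nhds hid ?_ ?_
      · filter_upwards [hIoc] with z hz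
        exact (hcc1 z hz).1.le
      · filter_upwards [hIoc] with z hz
        exact (hcc1 z hz).2.le
    -- limit of minimizers
    obtain ⟨τs, hτsT, hτsle⟩ : ∃ τs ∈ T, (u.map fun z => τfn (γ z)) ≤ 𝓝 τs := by
      apply hT.ultrafilter_le_nhds
      rw [Ultrafilter.coe_map]
      exact le_principal_iff.2 (Filter.mem_map.2 (Filter.univ_mem' fun z => hτT (γ z)))
    have hτst : Tendsto (fun z => τfn (γ z)) (u : Filter ℝ) (𝓝 τs) := by
      rwa [Ultrafilter.coe_map] at hτsle
    have hγx : ContinuousAt γ x := hγcont x ⟨hx0, hxt.le⟩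
    have hγcc : Tendsto (fun z => γ (cc z)) (u : Filter ℝ) (𝓝 (γ x)) :=
      hγx.tendsto.comp hccx
    have hγz : Tendsto (fun z => γ z) (u : Filter ℝ) (𝓝 (γ x)) := hγx.tendsto.comp hid
    have happ : Tendsto (fun z => (Dh (τfn (γ z)) (γ (cc z))) (F (γ (cc z))))
        (u : Filter ℝ) (𝓝 ((Dh τs (γ x)) (F (γ x)))) := by
      have h1 : Tendsto (fun z => Dh (τfn (γ z)) (γ (cc z))) (u : Filter ℝ)
          (𝓝 (Dh τs (γ x))) :=
        Filter.Tendsto.comp (hDc.continuousAt (x := (τs, γ x))) (hτst.prodMk_nhds hγcc)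
      have h2 : Tendsto (fun z => F (γ (cc z))) (u : Filter ℝ) (𝓝 (F (γ x))) :=
        Filter.Tendsto.comp (hF.continuousAt (x := γ x)) hγcc
      exact Filter.Tendsto.comp (isBoundedBilinearMap_apply.continuous.continuousAt
        (x := (Dh τs (γ x), F (γ x)))) (h1.prodMk_nhds h2)
    have hτsmin : ∀ σ ∈ T, h τs (γ x) ≤ h σ (γ x) := by
      intro σ hσ
      have g1 : Tendsto (fun z => h (τfn (γ z)) (γ z)) (u : Filter ℝ) (𝓝 (h τs (γ x))) :=
        Filter.Tendsto.comp (hc.continuousAt (x := (τs, γ x))) (hτst.prodMk_nhds hγz)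
      have g2 : Tendsto (fun z => h σ (γ z)) (u : Filter ℝ) (𝓝 (h σ (γ x))) :=
        Filter.Tendsto.comp (g := fun q : (Fin p → ℝ) × (Fin n → ℝ) => h q.1 q.2)
          (f := fun z : ℝ => (σ, γ z)) (hc.continuousAt (x := (σ, γ x)))
          (Filter.Tendsto.prodMk_nhds tendsto_const_nhds hγz)
      exact le_of_tendsto_of_tendsto' g1 g2 fun z => hτmin (γ z) σ hσ
    have hxNS : γ x ∈ N \ S :=
      ⟨hNmem x hx1.le hx2.le, hnotS x hx1 hxt.le⟩
    have hpos : 0 ≤ (Dh τs (γ x)) (F (γ x)) := hcond _ hxNS τs hτsT hτsmin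
    have hqle : ∀ᶠ z in (u : Filter ℝ),
        (Dh (τfn (γ z)) (γ (cc z))) (F (γ (cc z))) ≤ -r := by
      filter_upwards [hIoc, hu hbad] with z hz hb
      have hzx : (0:ℝ) < z - x := by linarith [hz.1]
      rw [slope_def_field] at hb
      push_neg at hb
      have hb' : r ≤ (-(Hf (γ z)) - -(Hf (γ x))) / (z - x) := hb
      have := (le_div_iff₀ hzx).1 hb'
      refine (hcc2 z hz).trans ?_
      rw [div_le_iff₀ hzx]
      linarith
    have : (Dh τs (γ x)) (F (γ x)) ≤ -r := le_of_tendsto happ hqle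
    linarith
  -- monotonicity past t₀
  have main : ∀ a, t₀ < a → a < m → Hf (γ a) ≤ Hf (γ m) := by
    intro a ha1 ha2
    have hγOn : ContinuousOn γ (Icc a m) := fun s hs =>
      (hγcont s ⟨(ht₀0.trans ha1.le).trans hs.1, hs.2.trans hmt⟩).continuousWithinAt
    have hfc : ContinuousOn (fun s => -(Hf (γ s))) (Icc a m) :=
      (hHc.comp_continuousOn hγOn).neg
    have := image_le_of_liminf_slope_right_le_deriv_boundary
      (f := fun s => -(Hf (γ s))) (B := fun _ => -(Hf (γ a))) (B' := fun _ => 0)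
      hfc le_rfl continuousOn_const
      (fun s _ => hasDerivWithinAt_const s _ _)
      (fun s hs r hr => key s (ha1.trans_le hs.1) hs.2 r hr)
      (right_mem_Icc.2 ha2.le)
    linarith [show -Hf (γ m) ≤ -Hf (γ a) from this]
  -- limiting contradiction
  have hlim : Tendsto (fun a => Hf (γ a)) (𝓝[>] t₀) (𝓝 (Hf (γ t₀))) :=
    ((hHc.continuousAt).comp (hγcont t₀ ⟨ht₀0, ht₀t⟩)).tendsto.mono_left nhdsWithin_le_nhds
  have hev : ∀ᶠ a in 𝓝[>] t₀, Hf (γ a) ≤ Hf (γ m) := by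
    filter_upwards [Ioo_mem_nhdsGT_of_mem ⟨le_rfl, ht₀m⟩] with a ha
    exact main a ha.1 ha.2
  have h1 : Hf (γ t₀) ≤ Hf (γ m) := le_of_tendsto hlim hev
  have h2 : 0 ≤ Hf (γ t₀) := (hSH _).1 ht₀S
  have h3 : ¬ 0 ≤ Hf (γ m) := fun hh => hnotS m ht₀m hmt ((hSH _).2 hh)
  exact h3 (h2.trans h1)
end

section
/- Let T ⊂ ℝ^p be compact, X ⊆ ℝ^n, a : T × X → ℝ and b : T × X → ℝ^{1×m} continuous, and define the set-valued map V(x) = {ν ∈ ℝ^m : a(τ,x) + b(τ,x)·ν ≤ 0 for all τ ∈ T}. Suppose for each x ∈ X there exists ν with a(τ,x) + b(τ,x)·ν < 0 for all τ ∈ T. Then V is lower semicontinuous on X: for every x ∈ X and every open set O ⊆ ℝ^m with V(x) ∩ O ≠ ∅, there is a neighborhood W of x such that V(x') ∩ O ≠ ∅ for all x' ∈ W. -/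
open Filter Topology

/-- under the Slater condition, the feasible-set map
`V(x) = {ν : a(τ,x) + b(τ,x)·ν ≤ 0 ∀τ ∈ T}` is lower semicontinuous on `X`. -/
theorem stmt12 {p n m : ℕ} (T : Set (Fin p → ℝ)) (hT : IsCompact T)
    (X : Set (Fin n → ℝ))
    (a : (Fin p → ℝ) → (Fin n → ℝ) → ℝ)
    (b : (Fin p → ℝ) → (Fin n → ℝ) → (Fin m → ℝ))
    (ha : ContinuousOn (fun q : (Fin p → ℝ) × (Fin n → ℝ) => a q.1 q.2) (T ×ˢ X))
    (hb : ContinuousOn (fun q : (Fin p → ℝ) × (Fin n → ℝ) => b q.1 q.2) (T ×ˢ X))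
    (V : (Fin n → ℝ) → Set (Fin m → ℝ))
    (hV : ∀ x, V x = {ν | ∀ τ ∈ T, a τ x + ∑ i, b τ x i * ν i ≤ 0})
    (hslater : ∀ x ∈ X, ∃ ν : Fin m → ℝ, ∀ τ ∈ T, a τ x + ∑ i, b τ x i * ν i < 0) :
    ∀ x ∈ X, ∀ O : Set (Fin m → ℝ), IsOpen O → (V x ∩ O).Nonempty →
      ∃ W : Set (Fin n → ℝ), IsOpen W ∧ x ∈ W ∧
        ∀ x' ∈ W ∩ X, (V x' ∩ O).Nonempty := by
  intro x hx O hO hne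
  obtain ⟨ν₀, hν₀V, hν₀O⟩ := hne
  rw [hV] at hν₀V
  obtain ⟨νs, hνs⟩ := hslater x hx
  -- choose a small t > 0 so that the convex combination lies in O
  set νc : ℝ → (Fin m → ℝ) := fun t i => ν₀ i + t * (νs i - ν₀ i) with hνc
  have hcont : Continuous νc := by
    apply continuous_pi
    intro i
    exact continuous_const.add (continuous_id.mul continuous_const)
  have h0 : νc 0 = ν₀ := by funext i; simp [hνc]
  have hev : ∀ᶠ t : ℝ in 𝓝 (0:ℝ), νc t ∈ O := by
    have := hcont.continuousAt (x := (0:ℝ))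
    rw [ContinuousAt, h0] at this
    exact this.eventually_mem (hO.mem_nhds hν₀O)
  have hev1 : ∀ᶠ t : ℝ in 𝓝 (0:ℝ), t < 1 := eventually_lt_nhds one_pos
  have h2 : ∀ᶠ t : ℝ in 𝓝[>] (0:ℝ), (νc t ∈ O ∧ t < 1) ∧ t ∈ Set.Ioi (0:ℝ) :=
    ((hev.and hev1).filter_mono nhdsWithin_le_nhds).and self_mem_nhdsWithin
  obtain ⟨t, ⟨htO, ht1⟩, ht0⟩ := h2.exists
  set ν : Fin m → ℝ := νc t
  have ht0' : (0:ℝ) < t := ht0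
  -- strict feasibility of ν at x
  have hkey : ∀ τ x', a τ x' + ∑ i, b τ x' i * ν i
      = (1 - t) * (a τ x' + ∑ i, b τ x' i * ν₀ i) + t * (a τ x' + ∑ i, b τ x' i * νs i) := by
    intro τ x'
    have : ∑ i, b τ x' i * ν i
        = ∑ i, ((1 - t) * (b τ x' i * ν₀ i) + t * (b τ x' i * νs i)) :=
      Finset.sum_congr rfl (fun i _ => by simp only [ν, νc]; ring)
    rw [this, Finset.sum_add_distrib, ← Finset.mul_sum, ← Finset.mul_sum]
    ring
  have hstrict : ∀ τ ∈ T, a τ x + ∑ i, b τ x i * ν i < 0 := by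
    intro τ hτ
    rw [hkey]
    nlinarith [hν₀V τ hτ, hνs τ hτ]
  -- continuity of the feasibility function for fixed ν
  set g : (Fin p → ℝ) × (Fin n → ℝ) → ℝ := fun q => a q.1 q.2 + ∑ i, b q.1 q.2 i * ν i
  have hg : ContinuousOn g (T ×ˢ X) := by
    apply ha.add
    apply continuousOn_finset_sum
    intro i _
    exact ((continuous_apply i).comp_continuousOn hb).mul continuousOn_const
  -- compactness argument: uniform strict feasibility near x
  have hP : ∀ τ ∈ T, ∀ᶠ z : (Fin n → ℝ) × (Fin p → ℝ) in 𝓝 (x, τ),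
      (z.2 ∈ T ∧ z.1 ∈ X) → g (z.2, z.1) < 0 := by
    intro τ hτ
    have hc : ContinuousWithinAt g (T ×ˢ X) (τ, x) := hg (τ, x) ⟨hτ, hx⟩
    have h1 : ∀ᶠ q in 𝓝[T ×ˢ X] (τ, x), g q < 0 :=
      hc.eventually (eventually_lt_nhds (hstrict τ hτ))
    rw [eventually_nhdsWithin_iff] at h1
    have hsw : Filter.Tendsto (Prod.swap : (Fin n → ℝ) × (Fin p → ℝ) → _)
        (𝓝 (x, τ)) (𝓝 (τ, x)) := continuous_swap.tendsto (x, τ)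
    filter_upwards [hsw.eventually h1] with z hz hmem
    exact hz ⟨hmem.1, hmem.2⟩
  have hW : ∀ᶠ x' in 𝓝 x, ∀ τ ∈ T, (τ ∈ T ∧ x' ∈ X) → g (τ, x') < 0 :=
    hT.eventually_forall_of_forall_eventually hP
  obtain ⟨W, hWsub, hWopen, hxW⟩ := mem_nhds_iff.mp hW
  refine ⟨W, hWopen, hxW, ?_⟩
  rintro x' ⟨hx'W, hx'X⟩
  refine ⟨ν, ?_, htO⟩
  rw [hV]
  intro τ hτ
  exact le_of_lt (hWsub hx'W τ hτ ⟨hτ, hx'X⟩)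
end

section
/- Let T ⊂ ℝ^p and X ⊂ ℝ^n be compact, and let a : T × X → ℝ and b : T × X → ℝ^{1×m} be Lipschitz with constants L_a and L_b respectively (with respect to τ, uniformly in x). Let ε > 0, M > 0, and set Δ* = ε/(L_a + L_b·M). Suppose {τ_1,…,τ_N} ⊆ T and Δ ≤ Δ* are such that the balls B_Δ(τ_i) cover T. If ν ∈ ℝ^m satisfies ‖ν‖ ≤ M and a(τ_i,x) + b(τ_i,x)·ν ≤ −ε for all i ∈ {1,…,N}, then a(τ,x) + b(τ,x)·ν ≤ 0 for all τ ∈ T. -/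
/-!
Between a sample point `τᵢ` and any `τ` within distance `Δ` of it, the constraint
`τ ↦ a(τ,x) + b(τ,x)·ν` can grow by at most `(L_a + L_b M) Δ ≤ ε` (Cauchy–Schwarz for the
`b`-term), which the margin `ε` at `τᵢ` absorbs.
-/

open Metric

section

variable {P E ι : Type*} [PseudoMetricSpace P] [NormedAddCommGroup E] [InnerProductSpace ℝ E]

theorem real_inner_sub_le_of_norm_sub_le {u v ν : E} {L M : ℝ} (huv : ‖u - v‖ ≤ L)
    (hν : ‖ν‖ ≤ M) : inner ℝ u ν - inner ℝ v ν ≤ L * M := by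
  rw [← inner_sub_left]
  calc inner ℝ (u - v) ν ≤ ‖u - v‖ * ‖ν‖ := real_inner_le_norm _ _
    _ ≤ L * M := mul_le_mul huv hν (norm_nonneg _) ((norm_nonneg _).trans huv)

theorem affine_constraint_sub_le {a : P → ℝ} {b : P → E} {ν : E} {La Lb M : ℝ} {τ τ' : P}
    (ha : |a τ - a τ'| ≤ La * dist τ τ') (hb : ‖b τ - b τ'‖ ≤ Lb * dist τ τ')
    (hν : ‖ν‖ ≤ M) :
    a τ + inner ℝ (b τ) ν - (a τ' + inner ℝ (b τ') ν) ≤ (La + Lb * M) * dist τ τ' := by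
  have hb' := real_inner_sub_le_of_norm_sub_le hb hν
  linarith [le_abs_self (a τ - a τ')]

theorem nonpos_of_le_neg_on_closedBall_cover {f : P → ℝ} {T : Set P} {τs : ι → P}
    {L ε Δ : ℝ} (hL : 0 ≤ L) (hLΔ : L * Δ ≤ ε) (hcover : T ⊆ ⋃ i, closedBall (τs i) Δ)
    (hf : ∀ τ ∈ T, ∀ i, f τ - f (τs i) ≤ L * dist τ (τs i)) (hsample : ∀ i, f (τs i) ≤ -ε) :
    ∀ τ ∈ T, f τ ≤ 0 := by
  intro τ hτ
  obtain ⟨i, hi⟩ := Set.mem_iUnion.mp (hcover hτ)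
  have hgrowth : L * dist τ (τs i) ≤ ε :=
    (mul_le_mul_of_nonneg_left (mem_closedBall.mp hi) hL).trans hLΔ
  linarith [hf τ hτ i, hsample i]

end

theorem stmt14_general {p n m : ℕ} (T : Set (EuclideanSpace ℝ (Fin p)))
    (X : Set (EuclideanSpace ℝ (Fin n)))
    (a : EuclideanSpace ℝ (Fin p) → EuclideanSpace ℝ (Fin n) → ℝ)
    (b : EuclideanSpace ℝ (Fin p) → EuclideanSpace ℝ (Fin n) → EuclideanSpace ℝ (Fin m))
    (La Lb : ℝ)
    (haLip : ∀ x ∈ X, ∀ τ ∈ T, ∀ τ' ∈ T, |a τ x - a τ' x| ≤ La * ‖τ - τ'‖)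
    (hbLip : ∀ x ∈ X, ∀ τ ∈ T, ∀ τ' ∈ T, ‖b τ x - b τ' x‖ ≤ Lb * ‖τ - τ'‖)
    (ε M : ℝ)
    (hLaLbM : 0 < La + Lb * M)
    (N : ℕ) (τs : Fin N → EuclideanSpace ℝ (Fin p)) (hτs : ∀ i, τs i ∈ T)
    (Δ : ℝ) (hΔ : Δ ≤ ε / (La + Lb * M))
    (hcover : T ⊆ ⋃ i : Fin N, Metric.closedBall (τs i) Δ)
    (x : EuclideanSpace ℝ (Fin n)) (hx : x ∈ X)
    (ν : EuclideanSpace ℝ (Fin m)) (hν : ‖ν‖ ≤ M)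
    (hsample : ∀ i : Fin N, a (τs i) x + (inner ℝ (b (τs i) x) ν : ℝ) ≤ -ε) :
    ∀ τ ∈ T, a τ x + (inner ℝ (b τ x) ν : ℝ) ≤ 0 := by
  have hLΔ : (La + Lb * M) * Δ ≤ ε := by
    rw [mul_comm]
    exact (le_div_iff₀ hLaLbM).mp hΔ
  refine nonpos_of_le_neg_on_closedBall_cover hLaLbM.le hLΔ hcover (fun τ hτ i => ?_) hsample
  apply affine_constraint_sub_le (a := (a · x)) (b := (b · x)) _ _ hν
  · simpa only [dist_eq_norm] using haLip x hx τ hτ (τs i) (hτs i)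
  · simpa only [dist_eq_norm] using hbLip x hx τ hτ (τs i) (hτs i)

/-- quantitative core of Proposition 5: a bounded input satisfying
the finitely many sampled constraints with margin `ε` satisfies all constraints. -/
theorem stmt14 {p n m : ℕ} (T : Set (EuclideanSpace ℝ (Fin p))) (hT : IsCompact T)
    (X : Set (EuclideanSpace ℝ (Fin n))) (hX : IsCompact X)
    (a : EuclideanSpace ℝ (Fin p) → EuclideanSpace ℝ (Fin n) → ℝ)
    (b : EuclideanSpace ℝ (Fin p) → EuclideanSpace ℝ (Fin n) → EuclideanSpace ℝ (Fin m))
    (La Lb : ℝ)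
    (haLip : ∀ x ∈ X, ∀ τ ∈ T, ∀ τ' ∈ T, |a τ x - a τ' x| ≤ La * ‖τ - τ'‖)
    (hbLip : ∀ x ∈ X, ∀ τ ∈ T, ∀ τ' ∈ T, ‖b τ x - b τ' x‖ ≤ Lb * ‖τ - τ'‖)
    (ε M : ℝ) (hε : 0 < ε) (hM : 0 < M)
    (hLaLbM : 0 < La + Lb * M)
    (N : ℕ) (τs : Fin N → EuclideanSpace ℝ (Fin p)) (hτs : ∀ i, τs i ∈ T)
    (Δ : ℝ) (hΔ : Δ ≤ ε / (La + Lb * M))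
    (hcover : T ⊆ ⋃ i : Fin N, Metric.closedBall (τs i) Δ)
    (x : EuclideanSpace ℝ (Fin n)) (hx : x ∈ X)
    (ν : EuclideanSpace ℝ (Fin m)) (hν : ‖ν‖ ≤ M)
    (hsample : ∀ i : Fin N, a (τs i) x + (inner ℝ (b (τs i) x) ν : ℝ) ≤ -ε) :
    ∀ τ ∈ T, a τ x + (inner ℝ (b τ x) ν : ℝ) ≤ 0 :=
  stmt14_general T X a b La Lb haLip hbLip ε M hLaLbM N τs hτs Δ hΔ hcover x hx ν hν hsample
end
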